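/- For the Narayana numbers, the determinant det[[N(n+2),N(n+1),N(n)],[N(n+1),N(n),N(n-1)],[N(n),N(n-1),N(n-2)]] equals −1 for all integers n. -/

import Mathlib

/-!
Shifting the window of a third-order recurrence `a n = p a(n-1) + q a(n-2) + a(n-3)` multiplies
the 3×3 Hankel matrix on the right by the companion matrix, whose determinant is the last
coefficient `1`. Hence the Hankel determinant is the same for every `n`, and for the Narayana
numbers its value at `n = 0` is `det !![1, 1, 0; 1, 0, 0; 0, 0, 1] = -1`.
-/

open Matrix

variable {R : Type*} [CommRing R]

def hankel3 (a : ℤ → R) (n : ℤ) : Matrix (Fin 3) (Fin 3) R :=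
  !![a (n + 2), a (n + 1), a n;
     a (n + 1), a n, a (n - 1);
     a n, a (n - 1), a (n - 2)]

def companion3 (p q : R) : Matrix (Fin 3) (Fin 3) R :=
  !![p, 1, 0;
     q, 0, 1;
     1, 0, 0]

theorem det_companion3 (p q : R) : (companion3 p q).det = 1 := by
  simp [companion3, det_fin_three]

theorem hankel3_add_one {a : ℤ → R} {p q : R}
    (hrec : ∀ n, a n = p * a (n - 1) + q * a (n - 2) + a (n - 3)) (n : ℤ) :
    hankel3 a (n + 1) = hankel3 a n * companion3 p q := by
  ext i j
  fin_cases i <;> fin_cases j <;> simp [hankel3, companion3, mul_apply, Fin.sum_univ_three]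
  all_goals first | (congr 1; ring1) | (rw [hrec]; ring_nf)

theorem det_hankel3_eq_det_hankel3_zero {a : ℤ → R} {p q : R}
    (hrec : ∀ n, a n = p * a (n - 1) + q * a (n - 2) + a (n - 3)) (n : ℤ) :
    (hankel3 a n).det = (hankel3 a 0).det := by
  have periodic : Function.Periodic (fun k => (hankel3 a k).det) 1 := fun k => by
    simp only [hankel3_add_one hrec, det_mul, det_companion3, mul_one]
  simpa using periodic.int_mul_eq n

theorem narayana_det (N : ℤ → ℤ) (h0 : N 0 = 0) (h1 : N 1 = 1) (h2 : N 2 = 1)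
    (hrec : ∀ n : ℤ, N n = N (n - 1) + N (n - 3)) :
    ∀ n : ℤ,
      Matrix.det !![N (n + 2), N (n + 1), N n;
                    N (n + 1), N n, N (n - 1);
                    N n, N (n - 1), N (n - 2)] = -1 := by
  intro n
  have hrec_companion (k : ℤ) : N k = 1 * N (k - 1) + 0 * N (k - 2) + N (k - 3) := by
    simpa using hrec k
  have h_neg_one : N (-1) = 0 := by have := hrec 2; norm_num [h1, h2] at this; exact this
  have h_neg_two : N (-2) = 1 := by have := hrec 1; norm_num [h0, h1] at this; linarith
  change (hankel3 N n).det = -1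
  rw [det_hankel3_eq_det_hankel3_zero hrec_companion n]
  simp [hankel3, det_fin_three, h0, h1, h2, h_neg_one, h_neg_two]
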